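/- Let h be a hyperexponential term given in standard form h = c0·exp(a/b)·∏_{ℓ=1}^L c_ℓ^{e_ℓ} satisfying the nondegeneracy assumptions. Then there exists a creative telescoping relation for h of order at most γ + 1 − φ3, i.e. there exist polynomials p_0, …, p_r ∈ K[x] with r = γ + 1 − φ3, not all zero, and a rational function q ∈ K(x,y) such that p_0·h + p_1·D_x h + ⋯ + p_r·D_x^r h = D_y(q·h). -/

import Mathlib

open Polynomial Finset

/-- The derivative with respect to `y` on `K[y][x]`
(we represent bivariate polynomials as `Polynomial (Polynomial K)`,
the *outer* variable being `x`, the *inner* variable being `y`). -/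
noncomputable def DY {K : Type*} [CommRing K] (p : Polynomial (Polynomial K)) :
    Polynomial (Polynomial K) :=
  p.sum fun n a => Polynomial.C (Polynomial.derivative a) * Polynomial.X ^ n

/-- The degree with respect to `y` of an element of `K[y][x]`. -/
noncomputable def degY {K : Type*} [CommRing K] (p : Polynomial (Polynomial K)) : ℕ :=
  p.support.sup fun n => (p.coeff n).natDegree

/-- The embedding of `K[x]` into `K[y][x]` (polynomials free of `y`). -/
noncomputable def liftX {K : Type*} [CommRing K] (p : Polynomial K) :
    Polynomial (Polynomial K) :=
  p.map (Polynomial.C : K →+* Polynomial K)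

/-- The falling factorial `z(z-1)⋯(z-n+1)` of an element of `K`. -/
noncomputable def ffall {K : Type*} [Field K] (z : K) (n : ℕ) : K :=
  ∏ j ∈ Finset.range n, (z - (j : K))

/-!
Write `W = b² ∏ c_ℓ`, `V = W^r b* c₀` and `B = b b* ∏ c_ℓ`. By induction,
`D_x^i h = h u_i / (W^i c₀)` with polynomials `u_i`, and the quotient rule gives
`D_y (z h / V) = h (D_y z · B + z G) / (V B)` with a polynomial `G`; that `G` is a polynomial
rests on `b ∣ D_y b · b*`. Since `V B = W^r · b b*² ∏ c_ℓ · c₀`, a telescoper of order `r` is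
the same as a solution `(p_0, …, p_r, z)` of the linear system
`∑ p_i u_i W^(r-i) b b*² ∏ c_ℓ = D_y z · B + z G` over `K(x)`. As `deg_y B ≤ γ` and
`deg_y G < γ`, counting dimensions (with `z` of bounded `y`-degree) gives a solution space of
dimension at least `r + 2 - γ`, whereas the solutions with all `p_i = 0` solve the first-order
equation `D_y z · B + z G = 0`, whose polynomial solutions form a space of dimension at most one:
two of them have vanishing Wronskian. So for `r ≥ γ` some `p_i` is nonzero, and clearing
denominators makes the `p_i` and `z` polynomial.
-/

theorem Polynomial.derivative_pow_mul_self {R : Type*} [CommRing R] (p : R[X]) (n : ℕ) :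
    derivative (p ^ n) * p = n * p ^ n * derivative p := by
  rw [derivative_pow, C_eq_natCast]
  rcases n with _ | n
  · simp
  · rw [Nat.add_sub_cancel]
    ring

theorem Polynomial.Bivariate.coeff_coeff_swap {R : Type*} [CommRing R] (p : R[X][X]) (j n : ℕ) :
    ((swap p).coeff j).coeff n = (p.coeff n).coeff j := by
  induction p using Polynomial.induction_on' with
  | add p q hp hq => simp [hp, hq]
  | monomial m f =>
    induction f using Polynomial.induction_on' with
    | add f g hf hg => simp only [map_add, coeff_add, hf, hg]
    | monomial k a =>
      rw [swap_monomial_monomial]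
      simp only [coeff_monomial]
      split_ifs <;> simp_all [coeff_monomial]

open Bivariate

section DY

/- `swap` moves `y` to the outside, turning `degY` and `DY` into `natDegree` and
`derivative`. -/

variable {K : Type*} [CommRing K]

theorem degY_le_iff {p : K[X][X]} {d : ℕ} : degY p ≤ d ↔ ∀ n, (p.coeff n).natDegree ≤ d := by
  refine Finset.sup_le_iff.trans ⟨fun h n => ?_, fun h n _ => h n⟩
  by_cases hn : n ∈ p.support
  · exact h n hn
  · simp [notMem_support_iff.mp hn]

theorem natDegree_swap (p : K[X][X]) : (swap p).natDegree = degY p := by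
  refine le_antisymm (natDegree_le_iff_coeff_eq_zero.mpr fun j hj => ?_)
    (degY_le_iff.mpr fun n => natDegree_le_iff_coeff_eq_zero.mpr fun j hj => ?_)
  · ext n
    rw [coeff_coeff_swap, coeff_zero]
    exact coeff_eq_zero_of_natDegree_lt ((degY_le_iff.mp le_rfl n).trans_lt hj)
  · rw [← coeff_coeff_swap, coeff_eq_zero_of_natDegree_lt hj, coeff_zero]

theorem coeff_DY (p : K[X][X]) (n : ℕ) : (DY p).coeff n = derivative (p.coeff n) := by
  rw [DY, Polynomial.sum, finsetSum_coeff]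
  simp only [coeff_C_mul_X_pow]
  rw [Finset.sum_ite_eq]
  split_ifs with h
  · rfl
  · rw [notMem_support_iff.mp h, derivative_zero]

theorem swap_DY (p : K[X][X]) : swap (DY p) = derivative (swap p) := by
  ext j n
  simp only [coeff_coeff_swap, coeff_DY, coeff_derivative]
  rw [← Nat.cast_add_one, ← Nat.cast_add_one, coeff_mul_natCast, coeff_coeff_swap]

theorem DY_mul (p q : K[X][X]) : DY (p * q) = DY p * q + p * DY q :=
  swap.injective <| by simp only [swap_DY, map_mul, map_add, derivative_mul]

theorem DY_pow_mul (p : K[X][X]) (n : ℕ) : DY (p ^ n) * p = n * p ^ n * DY p :=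
  swap.injective <| by
    simp only [swap_DY, map_mul, map_pow, map_natCast, derivative_pow_mul_self]

theorem DY_eq_zero_of_degY_eq_zero {p : K[X][X]} (h : degY p = 0) : DY p = 0 :=
  swap.injective <| by
    rw [swap_DY, derivative_of_natDegree_zero (by rwa [natDegree_swap]), map_zero]

theorem degY_zero : degY (0 : K[X][X]) = 0 := by
  rw [← natDegree_swap, map_zero, natDegree_zero]

theorem degY_mul_le (p q : K[X][X]) : degY (p * q) ≤ degY p + degY q := by
  simpa only [← natDegree_swap, map_mul] using natDegree_mul_le

theorem degY_add_le (p q : K[X][X]) : degY (p + q) ≤ max (degY p) (degY q) := by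
  simpa only [← natDegree_swap, map_add] using natDegree_add_le _ _

theorem degY_sub_le (p q : K[X][X]) : degY (p - q) ≤ max (degY p) (degY q) := by
  simpa only [← natDegree_swap, map_sub] using natDegree_sub_le _ _

theorem degY_natCast_mul_le (n : ℕ) (p : K[X][X]) : degY ((n : K[X][X]) * p) ≤ degY p := by
  simpa only [← natDegree_swap, map_mul, map_natCast, natDegree_natCast, zero_add] using
    natDegree_mul_le (p := (n : K[X][X])) (q := swap p)

theorem degY_smul_le (e : K) (p : K[X][X]) : degY (e • p) ≤ degY p := by
  simpa only [← natDegree_swap, map_smul] using natDegree_smul_le e (swap p)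

theorem degY_prod_le {ι : Type*} (s : Finset ι) (f : ι → K[X][X]) :
    degY (∏ i ∈ s, f i) ≤ ∑ i ∈ s, degY (f i) := by
  simpa only [← natDegree_swap, map_prod] using natDegree_prod_le s (fun i => swap (f i))

theorem degY_sum_lt {ι : Type*} (s : Finset ι) (f : ι → K[X][X]) {n : ℕ} (hn : 0 < n)
    (hf : ∀ i ∈ s, degY (f i) < n) : degY (∑ i ∈ s, f i) < n := by
  simp only [← natDegree_swap, map_sum] at hf ⊢
  exact (natDegree_sum_le_of_forall_le _ _ fun i hi => Nat.le_pred_of_lt (hf i hi)).trans_lt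
    (Nat.pred_lt_of_lt hn)

theorem degY_DY_le (p : K[X][X]) : degY (DY p) ≤ degY p - 1 := by
  simpa only [← natDegree_swap, swap_DY] using natDegree_derivative_le (swap p)

theorem degY_DY_mul_lt {p q : K[X][X]} {n : ℕ} (hn : 0 < n) (h : degY p + degY q ≤ n) :
    degY (DY p * q) < n := by
  by_cases hp : degY p = 0
  · rwa [DY_eq_zero_of_degY_eq_zero hp, zero_mul, degY_zero]
  · have := degY_DY_le p
    have := degY_mul_le (DY p) q
    omega

theorem degY_mul [IsDomain K] {p q : K[X][X]} (hp : p ≠ 0) (hq : q ≠ 0) :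
    degY (p * q) = degY p + degY q := by
  simp only [← natDegree_swap, map_mul]
  exact natDegree_mul ((map_ne_zero_iff _ swap.injective).mpr hp)
    ((map_ne_zero_iff _ swap.injective).mpr hq)

end DY

open Module

theorem LinearMap.exists_ne_zero_apply_eq_apply {F V U W : Type*} [Field F] [AddCommGroup V]
    [Module F V] [FiniteDimensional F V] [AddCommGroup U] [Module F U] [FiniteDimensional F U]
    [AddCommGroup W] [Module F W] (f : V →ₗ[F] W) (g : U →ₗ[F] W) (S : Submodule F W)
    [FiniteDimensional F S] (hf : range f ≤ S) (hg : range g ≤ S)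
    (hdim : finrank F S + finrank F (ker g) < finrank F V + finrank F U) :
    ∃ v ≠ 0, ∃ u, f v = g u := by
  by_contra! H
  have hker : ker (f.coprod g) ≤ (ker g).map (inr F V U) := by
    rintro ⟨v, u⟩ hvu
    have hfv : f v = g (-u) := by
      rw [map_neg, eq_neg_iff_add_eq_zero]
      exact hvu
    obtain rfl : v = 0 := by
      by_contra hv
      exact H v hv _ hfv
    exact ⟨u, by simpa using hfv.symm, rfl⟩
  have hrange : range (f.coprod g) ≤ S := by
    rw [range_coprod]
    exact sup_le hf hg
  have h₁ := finrank_range_add_finrank_ker (f.coprod g)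
  have h₂ := Submodule.finrank_mono hrange
  have h₃ := (Submodule.finrank_mono hker).trans (Submodule.finrank_map_le _ _)
  rw [finrank_prod] at h₁
  omega

namespace Polynomial

section Wronskian

variable {R : Type*} [CommRing R] [IsDomain R]

theorem natDegree_eq_of_wronskian_eq_zero [CharZero R] {a b : R[X]} (ha : a ≠ 0) (hb : b ≠ 0)
    (hw : wronskian a b = 0) : a.natDegree = b.natDegree := by
  have hlc := congrArg leadingCoeff (sub_eq_zero.mp hw)
  simp only [leadingCoeff_mul, leadingCoeff_derivative] at hlc
  have h : (a.leadingCoeff * b.leadingCoeff) * (b.natDegree : R)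
      = (a.leadingCoeff * b.leadingCoeff) * (a.natDegree : R) := by
    linear_combination hlc
  exact_mod_cast (mul_left_cancel₀ (mul_ne_zero (leadingCoeff_ne_zero.mpr ha)
    (leadingCoeff_ne_zero.mpr hb)) h).symm

theorem leadingCoeff_smul_eq_of_wronskian_eq_zero [CharZero R] {a b : R[X]} (ha : a ≠ 0)
    (hw : wronskian a b = 0) : a.leadingCoeff • b = b.leadingCoeff • a := by
  by_cases hb : b = 0
  · simp [hb]
  set w := a.leadingCoeff • b - b.leadingCoeff • a
  have hww : wronskian a w = 0 := by
    rw [← wronskianBilin_apply, map_sub, map_smul, map_smul, wronskianBilin_apply,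
      wronskianBilin_apply, hw, wronskian_self_eq_zero, smul_zero, smul_zero, sub_zero]
  -- a nonzero `w` would have degree `a.natDegree`, but its coefficient there cancels
  by_contra hne
  have hw0 : w ≠ 0 := sub_ne_zero.mpr hne
  have hdeg := natDegree_eq_of_wronskian_eq_zero ha hw0 hww
  have hab := natDegree_eq_of_wronskian_eq_zero ha hb hw
  have : w.leadingCoeff = 0 := by
    have hb' : b.coeff a.natDegree = b.leadingCoeff := by rw [hab]; rfl
    rw [leadingCoeff, ← hdeg, coeff_sub, coeff_smul, coeff_smul, hb', smul_eq_mul, smul_eq_mul]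
    exact sub_eq_zero.mpr (mul_comm _ _)
  exact hw0 (leadingCoeff_eq_zero.mp this)

theorem wronskian_eq_zero_of_derivative_mul_add_mul_eq_zero {B C z₁ z₂ : R[X]} (hB : B ≠ 0)
    (h₁ : derivative z₁ * B + z₁ * C = 0) (h₂ : derivative z₂ * B + z₂ * C = 0) :
    wronskian z₁ z₂ = 0 :=
  mul_right_cancel₀ hB <| by
    rw [wronskian, zero_mul]
    linear_combination z₁ * h₂ - z₂ * h₁

end Wronskian

theorem mem_degreeLT_succ_iff {R : Type*} [Semiring R] {p : R[X]} {m : ℕ} :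
    p ∈ degreeLT R (m + 1) ↔ p.natDegree ≤ m := by
  rw [degreeLT_succ_eq_degreeLE, mem_degreeLE, natDegree_le_iff_degree_le]

theorem finrank_degreeLT (F : Type*) [Field F] (m : ℕ) : finrank F (degreeLT F m) = m := by
  rw [finrank_eq_card_basis (degreeLT.basis F m), Fintype.card_fin]

section Field

variable {F : Type*} [Field F] [CharZero F]

theorem finrank_ker_derivative_mul_add_mul_le_one {B : F[X]} (C : F[X]) (hB : B ≠ 0)
    (U : Submodule F F[X]) [FiniteDimensional F U] :
    finrank F (LinearMap.ker
      ((LinearMap.mulRight F B ∘ₗ derivative + LinearMap.mulRight F C).domRestrict U)) ≤ 1 := by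
  set T := LinearMap.ker
      ((LinearMap.mulRight F B ∘ₗ derivative + LinearMap.mulRight F C).domRestrict U)
  have hT : ∀ z ∈ T, derivative (z : F[X]) * B + (z : F[X]) * C = 0 := fun z hz => by
    simpa using LinearMap.mem_ker.mp hz
  by_cases hT0 : T = ⊥
  · rw [hT0, finrank_bot]
    exact zero_le_one
  obtain ⟨z₁, hz₁T, hz₁⟩ := Submodule.exists_mem_ne_zero_of_ne_bot hT0
  have hz₁' : (z₁ : F[X]) ≠ 0 := fun h => hz₁ (Subtype.ext h)
  refine (Submodule.finrank_mono (t := F ∙ z₁) fun z₂ hz₂T => ?_).trans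
    (finrank_span_singleton hz₁).le
  have hw := wronskian_eq_zero_of_derivative_mul_add_mul_eq_zero hB (hT z₁ hz₁T) (hT z₂ hz₂T)
  refine Submodule.mem_span_singleton.mpr
    ⟨(z₂ : F[X]).leadingCoeff / (z₁ : F[X]).leadingCoeff, Subtype.ext ?_⟩
  rw [Submodule.coe_smul, div_eq_inv_mul, mul_smul,
    ← leadingCoeff_smul_eq_of_wronskian_eq_zero hz₁' hw, smul_smul,
    inv_mul_cancel₀ (leadingCoeff_ne_zero.mpr hz₁'), one_smul]

theorem exists_sum_smul_eq_derivative_mul_add_mul {I : Type*} [Fintype I] (A : I → F[X])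
    {B C : F[X]} {n : ℕ} (hB : B ≠ 0) (hBn : B.natDegree ≤ n) (hCn : C.natDegree < n)
    (hn : n < Fintype.card I) :
    ∃ P : I → F, P ≠ 0 ∧ ∃ Z : F[X], ∑ i, P i • A i = derivative Z * B + Z * C := by
  classical
  set N := univ.sup fun i => (A i).natDegree
  -- `Z` ranges over `natDegree ≤ N + 1`; both sides then have `natDegree ≤ N + n`
  set U := degreeLT F (N + 2)
  have hf : LinearMap.range (Fintype.linearCombination F A) ≤ degreeLT F (N + n + 1) := by
    rintro _ ⟨P, rfl⟩
    rw [Fintype.linearCombination_apply, mem_degreeLT_succ_iff]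
    refine natDegree_sum_le_of_forall_le _ _ fun i _ => (natDegree_smul_le _ _).trans ?_
    exact (le_sup (f := fun i => (A i).natDegree) (mem_univ i)).trans le_self_add
  have hg : LinearMap.range
      ((LinearMap.mulRight F B ∘ₗ derivative + LinearMap.mulRight F C).domRestrict U)
        ≤ degreeLT F (N + n + 1) := by
    rintro _ ⟨⟨Z, hZ⟩, rfl⟩
    have hZN : Z.natDegree ≤ N + 1 := mem_degreeLT_succ_iff.mp hZ
    have hdZ := natDegree_derivative_le Z
    simp only [LinearMap.domRestrict_apply, LinearMap.add_apply, LinearMap.comp_apply,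
      LinearMap.mulRight_apply, mem_degreeLT_succ_iff]
    refine natDegree_add_le_of_degree_le (natDegree_mul_le.trans ?_) (natDegree_mul_le.trans ?_)
      <;> omega
  obtain ⟨P, hP, Z, hPZ⟩ := LinearMap.exists_ne_zero_apply_eq_apply _ _ _ hf hg <| by
    have := finrank_ker_derivative_mul_add_mul_le_one C hB U
    rw [finrank_degreeLT, finrank_degreeLT, Module.finrank_fintype_fun_eq_card]
    omega
  exact ⟨P, hP, Z, hPZ⟩

end Field

theorem exists_sum_smul_eq_derivative_mul_add_mul_of_isDomain {R : Type*} [CommRing R]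
    [IsDomain R] [CharZero R] {I : Type*} [Fintype I] (A : I → R[X])
    {B C : R[X]} {n : ℕ} (hB : B ≠ 0) (hBn : B.natDegree ≤ n) (hCn : C.natDegree < n)
    (hn : n < Fintype.card I) :
    ∃ p : I → R, p ≠ 0 ∧ ∃ z : R[X], ∑ i, p i • A i = derivative z * B + z * C := by
  set F := FractionRing R
  have hφ : Function.Injective (algebraMap R F) := IsFractionRing.injective R F
  have : CharZero F := charZero_of_injective_algebraMap hφ
  obtain ⟨P, hP, Z, hPZ⟩ := exists_sum_smul_eq_derivative_mul_add_mul
    (fun i => (A i).map (algebraMap R F)) (C := C.map (algebraMap R F))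
    ((Polynomial.map_ne_zero_iff hφ).mpr hB) (natDegree_map_le.trans hBn)
    (natDegree_map_le.trans_lt hCn) hn
  obtain ⟨b₁, hb₁M, hb₁⟩ := IsLocalization.integerNormalization_spec (nonZeroDivisors R) Z
  obtain ⟨b₂, hb₂⟩ := IsLocalization.exist_integer_multiples_of_finite (nonZeroDivisors R)
    fun i => b₁ • P i
  choose p hp using hb₂
  refine ⟨p, ?_, (b₂ : R) • IsLocalization.integerNormalization (nonZeroDivisors R) Z, ?_⟩
  · obtain ⟨i, hi⟩ := Function.ne_iff.mp hP
    refine Function.ne_iff.mpr ⟨i, fun h => ?_⟩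
    have := hp i
    rw [h, Pi.zero_apply, map_zero, Algebra.smul_def, Algebra.smul_def] at this
    simp only [zero_eq_mul, mul_eq_zero, map_eq_zero_iff _ hφ, nonZeroDivisors.coe_ne_zero,
      false_or] at this
    exact this.elim (nonZeroDivisors.ne_zero hb₁M) hi
  · apply map_injective _ hφ
    simp only [Polynomial.map_sum, Polynomial.map_smul, Polynomial.map_add, Polynomial.map_mul,
      ← derivative_map, hb₁, hp, algebraMap_smul, smul_assoc, ← Finset.smul_sum, hPZ,
      derivative_smul, smul_mul_assoc, smul_add]

end Polynomial

theorem exists_sum_liftX_mul_eq_DY_mul_add_mul {K : Type*} [Field K] [CharZero K] {σ : Type*}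
    (s : Finset σ) (A : σ → K[X][X]) {B G : K[X][X]} {n : ℕ} (hB : B ≠ 0) (hBn : degY B ≤ n)
    (hGn : degY G < n) (hn : n < s.card) :
    ∃ p : σ → K[X], (∃ i ∈ s, p i ≠ 0) ∧ ∃ z, ∑ i ∈ s, liftX (p i) * A i = DY z * B + z * G := by
  classical
  obtain ⟨p, hp, z, hpz⟩ := exists_sum_smul_eq_derivative_mul_add_mul_of_isDomain
    (fun i : s => swap (A i)) (C := swap G) (n := n) ((map_ne_zero_iff _ swap.injective).mpr hB)
    (by rwa [natDegree_swap]) (by rwa [natDegree_swap]) (by rwa [Fintype.card_coe])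
  refine ⟨fun i => if hi : i ∈ s then p ⟨i, hi⟩ else 0, ?_, swap z, swap.injective ?_⟩
  · obtain ⟨⟨i, hi⟩, hne⟩ := Function.ne_iff.mp hp
    exact ⟨i, hi, by simpa [hi] using hne⟩
  · simp only [map_sum, map_mul, map_add, swap_DY, swap_swap_apply, liftX, swap_map_C]
    rw [← hpz, ← Finset.sum_coe_sort s]
    simp [smul_eq_C_mul]

section Leibniz

variable {E : Type*} [Field E] {D : E → E}

theorem leibniz_div_mul_sq (hD : ∀ u v, D (u * v) = D u * v + u * D v) {x y : E} (hy : y ≠ 0) :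
    D (x / y) * y ^ 2 = D x * y - x * D y := by
  have h := hD (x / y) y
  rw [div_mul_cancel₀ x hy] at h
  rw [h]
  field_simp
  ring

theorem leibniz_ringHom_mul_div_mul_eq (hD : ∀ u v, D (u * v) = D u * v + u * D v)
    {P : Type*} [CommRing P] (ι : P →+* E) (δ : P → P) (hDι : ∀ q, D (ι q) = ι (δ q))
    {h : E} {Q N V B G : P} (hh : D h * ι Q = h * ι N) (hQ : ι Q ≠ 0) (hV : ι V ≠ 0)
    (hG : G * Q * V = (N * V - δ V * Q) * B) (z : P) :
    D (ι z * h / ι V) * ι (V * B) = h * ι (δ z * B + z * G) := by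
  have hdiv := leibniz_div_mul_sq hD (x := ι z * h) hV
  rw [hD, hDι, hDι] at hdiv
  have hGι := congrArg ι hG
  simp only [map_mul, map_sub] at hGι
  apply mul_right_cancel₀ (mul_ne_zero hV hQ)
  simp only [map_mul, map_add]
  linear_combination (ι B * ι Q) * hdiv + (ι z * ι V * ι B) * hh - h * ι z * hGι

noncomputable def iterDerivNum {R : Type*} [CommRing R] (c₀ W S : R[X]) : ℕ → R[X]
  | 0 => c₀
  | i + 1 => derivative (iterDerivNum c₀ W S i) * W
      - i * (iterDerivNum c₀ W S i * derivative W) + iterDerivNum c₀ W S i * S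

theorem iterate_mul_eq_mul_iterDerivNum (hD : ∀ u v, D (u * v) = D u * v + u * D v)
    {R : Type*} [CommRing R] (ι : R[X] →+* E) (hDι : ∀ q, D (ι q) = ι (derivative q))
    {h : E} {c₀ W S : R[X]} (hh : D h * ι (c₀ * W) = h * ι (derivative c₀ * W + c₀ * S))
    (hc₀ : ι c₀ ≠ 0) (i : ℕ) :
    D^[i] h * ι (W ^ i * c₀) = h * ι (iterDerivNum c₀ W S i) := by
  induction i with
  | zero => simp [iterDerivNum]
  | succ i ih =>
    have hDih := congrArg D ih
    rw [hD, hD, hDι, hDι, ← Function.iterate_succ_apply' D i h] at hDih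
    have hpow := congrArg ι (derivative_pow_mul_self W i)
    simp only [iterDerivNum, map_mul, map_add, map_sub, map_pow, map_natCast, derivative_mul]
      at hDih hpow hh ih ⊢
    apply mul_right_cancel₀ hc₀
    linear_combination (ι W * ι c₀) * hDih - (D^[i] h * ι c₀ ^ 2) * hpow
      - (i * ι (derivative W) * ι c₀ + ι W * ι (derivative c₀)) * ih
      + ι (iterDerivNum c₀ W S i) * hh

end Leibniz

theorem sum_ringHom_mul_eq_of_mul_eq {E P : Type*} [Field E] [CommRing P] (ι : P →+* E)
    {g : ℕ → E} {h T : E} {W c₀ M S : P} {u q : ℕ → P} {r : ℕ}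
    (hg : ∀ i, g i * ι (W ^ i * c₀) = h * ι (u i)) (hT : T * ι (W ^ r * M * c₀) = h * ι S)
    (hne : ι (W ^ r * M * c₀) ≠ 0)
    (hq : ∑ i ∈ range (r + 1), q i * (u i * W ^ (r - i) * M) = S) :
    ∑ i ∈ range (r + 1), ι (q i) * g i = T := by
  apply mul_right_cancel₀ hne
  rw [hT, ← hq, Finset.sum_mul, map_sum, Finset.mul_sum]
  refine Finset.sum_congr rfl fun i hi => ?_
  have hsplit : W ^ r * M * c₀ = (W ^ i * c₀) * (W ^ (r - i) * M) := by
    rw [← Nat.add_sub_cancel' (Nat.lt_succ_iff.mp (mem_range.mp hi)), pow_add,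
      Nat.add_sub_cancel_left]
    ring
  have hgi := hg i
  simp only [hsplit, map_mul] at hgi ⊢
  linear_combination (ι (q i) * ι (W ^ (r - i)) * ι M) * hgi

theorem dvd_leibniz_mul_of_prime_dvd {R : Type*} [CommRing R] [IsDomain R]
    [UniqueFactorizationMonoid R] {δ : R → R} (hδ : ∀ p q, δ (p * q) = δ p * q + p * δ q)
    {s : R} (b : R) (hb : ∀ q, Prime q → q ∣ b → q ∣ s) : b ∣ δ b * s := by
  induction b using UniqueFactorizationMonoid.induction_on_prime with
  | h₁ =>
    have h0 := hδ 0 0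
    rw [mul_zero, mul_zero, zero_mul, add_zero] at h0
    rw [h0, zero_mul]
  | h₂ x hx => exact hx.dvd
  | h₃ a p _ hp ih =>
    obtain ⟨t, rfl⟩ := hb p hp (dvd_mul_right p a)
    have ha := ih fun q hq hqa => hb q hq (hqa.mul_left p)
    rw [hδ, add_mul]
    refine dvd_add ⟨δ p * t, by ring⟩ ?_
    rw [mul_assoc]
    exact mul_dvd_mul_left p ha

section Certificate

variable {K : Type*} [CommRing K]

/-- `∏ c_ℓ · δ(∏ c_ℓ ^ e_ℓ) / ∏ c_ℓ ^ e_ℓ`. -/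
noncomputable def logDerivNum {L : ℕ} (δ : K[X][X] → K[X][X]) (c : Fin L → K[X][X])
    (e : Fin L → K) : K[X][X] :=
  ∑ ℓ, e ℓ • (δ (c ℓ) * ∏ j ∈ univ.erase ℓ, c j)

/-- With `ct = ∏ c_ℓ`, `Sy = logDerivNum DY c e` and `h₁ = DY b · bs / b`, this is
`B · (D_y h / h - D_y V / V)` for `B = b · bs · ct` and `V = (b² ct)^r · bs · c₀`. -/
noncomputable def certCoeff (r : ℕ) (a b bs h₁ ct Sy : K[X][X]) : K[X][X] :=
  DY a * bs * ct - a * h₁ * ct - 2 * r * (DY b * bs * ct) - DY bs * b * ct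
    - r * (b * bs * DY ct) + b * bs * Sy

theorem certCoeff_mul_eq (r : ℕ) {a b bs h₁ c₀ ct Sy : K[X][X]} (hh₁ : DY b * bs = b * h₁) :
    certCoeff r a b bs h₁ ct Sy * (c₀ * b ^ 2 * ct) * ((b ^ 2 * ct) ^ r * bs * c₀)
      = ((DY c₀ * b ^ 2 * ct + (DY a * b - a * DY b) * c₀ * ct + c₀ * b ^ 2 * Sy)
          * ((b ^ 2 * ct) ^ r * bs * c₀) - DY ((b ^ 2 * ct) ^ r * bs * c₀) * (c₀ * b ^ 2 * ct))
        * (b * bs * ct) := by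
  have hW := DY_pow_mul (b ^ 2 * ct) r
  have hb2 := DY_pow_mul b 2
  simp only [DY_mul] at hW hb2 ⊢
  unfold certCoeff
  linear_combination (bs * ct ^ 2 * a * b * (b ^ 2 * ct) ^ r * c₀ ^ 2) * hh₁
    + (bs ^ 2 * ct * b * c₀ ^ 2) * hW + (r * (b ^ 2 * ct) ^ r * bs ^ 2 * ct ^ 2 * c₀ ^ 2) * hb2

theorem degY_mul_logDerivNum_DY_lt {L : ℕ} {p : K[X][X]} {c : Fin L → K[X][X]} {e : Fin L → K}
    {n : ℕ} (hn : 0 < n) (h : degY p + ∑ ℓ, degY (c ℓ) ≤ n) :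
    degY (p * logDerivNum DY c e) < n := by
  rw [logDerivNum, mul_sum]
  refine degY_sum_lt _ _ hn fun ℓ _ => ?_
  rw [mul_smul_comm, mul_left_comm]
  refine (degY_smul_le _ _).trans_lt (degY_DY_mul_lt hn ?_)
  have := degY_mul_le p (∏ j ∈ univ.erase ℓ, c j)
  have := degY_prod_le (univ.erase ℓ) c
  have := add_sum_erase univ (fun j => degY (c j)) (mem_univ ℓ)
  omega

variable [IsDomain K]

theorem degY_lt_of_DY_mul_eq_mul {b s h₁ : K[X][X]} (hb : b ≠ 0) (hh₁ : DY b * s = b * h₁)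
    (h₁0 : h₁ ≠ 0) : degY h₁ < degY s := by
  have hDYb : DY b ≠ 0 := fun h => h₁0 <| by simpa [h, hb] using hh₁.symm
  have hbpos : degY b ≠ 0 := fun h => hDYb (DY_eq_zero_of_degY_eq_zero h)
  have := degY_DY_mul_lt (q := s) (n := degY b + degY s) (by omega) le_rfl
  rw [hh₁, degY_mul hb h₁0] at this
  omega

theorem degY_certCoeff_lt {L : ℕ} (r : ℕ) {a b bs h₁ : K[X][X]} {c : Fin L → K[X][X]}
    {e : Fin L → K} (hb : b ≠ 0) (hh₁ : DY b * bs = b * h₁)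
    (hpos : 0 < degY bs + max (degY a) (degY b) + ∑ ℓ, degY (c ℓ)) :
    degY (certCoeff r a b bs h₁ (∏ ℓ, c ℓ) (logDerivNum DY c e))
      < degY bs + max (degY a) (degY b) + ∑ ℓ, degY (c ℓ) := by
  set γ := degY bs + max (degY a) (degY b) + ∑ ℓ, degY (c ℓ)
  have hct := degY_prod_le univ c
  have ha : degY a ≤ max (degY a) (degY b) := le_max_left _ _
  have hb' : degY b ≤ max (degY a) (degY b) := le_max_right _ _
  have hmul := degY_mul_le (K := K)
  have hT₁ : degY (DY a * bs * ∏ ℓ, c ℓ) < γ := by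
    rw [mul_assoc]
    exact degY_DY_mul_lt hpos (by have := hmul bs (∏ ℓ, c ℓ); omega)
  have hT₂ : degY (a * h₁ * ∏ ℓ, c ℓ) < γ := by
    by_cases h₁0 : h₁ = 0
    · rwa [h₁0, mul_zero, zero_mul, degY_zero]
    have := degY_lt_of_DY_mul_eq_mul hb hh₁ h₁0
    have := hmul (a * h₁) (∏ ℓ, c ℓ)
    have := hmul a h₁
    omega
  have hT₃ : degY (2 * (r : K[X][X]) * (DY b * bs * ∏ ℓ, c ℓ)) < γ := by
    rw [show (2 * r : K[X][X]) = ((2 * r : ℕ) : K[X][X]) by push_cast; rfl, mul_assoc]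
    refine (degY_natCast_mul_le _ _).trans_lt ?_
    exact degY_DY_mul_lt hpos (by have := hmul bs (∏ ℓ, c ℓ); omega)
  have hT₄ : degY (DY bs * b * ∏ ℓ, c ℓ) < γ := by
    rw [mul_assoc]
    exact degY_DY_mul_lt hpos (by have := hmul b (∏ ℓ, c ℓ); omega)
  have hT₅ : degY ((r : K[X][X]) * (b * bs * DY (∏ ℓ, c ℓ))) < γ := by
    refine (degY_natCast_mul_le _ _).trans_lt ?_
    rw [mul_comm]
    exact degY_DY_mul_lt hpos (by have := hmul b bs; omega)
  have hT₆ : degY (b * bs * logDerivNum DY c e) < γ :=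
    degY_mul_logDerivNum_DY_lt hpos (by have := hmul b bs; omega)
  unfold certCoeff
  refine (degY_add_le _ _).trans_lt (max_lt ?_ hT₆)
  refine (degY_sub_le _ _).trans_lt (max_lt ?_ hT₅)
  refine (degY_sub_le _ _).trans_lt (max_lt ?_ hT₄)
  refine (degY_sub_le _ _).trans_lt (max_lt ?_ hT₃)
  exact (degY_sub_le _ _).trans_lt (max_lt hT₁ hT₂)

end Certificate

theorem minimal_order_bound_general
    {K : Type*} {E : Type*} [Field K] [CharZero K] [Field E]
    (Dx Dy : E → E)
    (hDxmul : ∀ u v : E, Dx (u * v) = Dx u * v + u * Dx v)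
    (hDymul : ∀ u v : E, Dy (u * v) = Dy u * v + u * Dy v)
    (ι : Polynomial (Polynomial K) →+* E)
    (hinj : Function.Injective ι)
    (hDxι : ∀ q : Polynomial (Polynomial K), Dx (ι q) = ι (Polynomial.derivative q))
    (hDyι : ∀ q : Polynomial (Polynomial K), Dy (ι q) = ι (DY q))
    (L : ℕ) (a b c0 bs : Polynomial (Polynomial K))
    (c : Fin L → Polynomial (Polynomial K)) (e : Fin L → K)
    (hb : b ≠ 0) (hc0 : c0 ≠ 0) (hc : ∀ ℓ, c ℓ ≠ 0)
    (hbs : Squarefree bs)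
    (hbsb : ∀ q : Polynomial (Polynomial K), Prime q → (q ∣ bs ↔ q ∣ b))
    (h : E)
    (hDxh : Dx h * ι (c0 * b ^ 2 * (∏ ℓ, c ℓ))
      = h * ι (Polynomial.derivative c0 * b ^ 2 * (∏ ℓ, c ℓ)
          + (Polynomial.derivative a * b - a * Polynomial.derivative b) * c0 * (∏ ℓ, c ℓ)
          + c0 * b ^ 2 * ∑ ℓ, e ℓ • (Polynomial.derivative (c ℓ) * ∏ j ∈ Finset.univ.erase ℓ, c j)))
    (hDyh : Dy h * ι (c0 * b ^ 2 * (∏ ℓ, c ℓ))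
      = h * ι (DY c0 * b ^ 2 * (∏ ℓ, c ℓ)
          + (DY a * b - a * DY b) * c0 * (∏ ℓ, c ℓ)
          + c0 * b ^ 2 * ∑ ℓ, e ℓ • (DY (c ℓ) * ∏ j ∈ Finset.univ.erase ℓ, c j)))
    (hndy : 0 < max (degY a) (degY b) + ∑ ℓ, degY (c ℓ))
    (φ3 : ℕ) (hφ3a : φ3 ≤ 1) :
    ∃ p : ℕ → Polynomial K,
      (∃ i ≤ (degY bs + max (degY a) (degY b) + ∑ ℓ, degY (c ℓ)) + 1 - φ3, p i ≠ 0) ∧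
      ∃ u v : Polynomial (Polynomial K), v ≠ 0 ∧
        ∑ i ∈ Finset.range ((degY bs + max (degY a) (degY b) + ∑ ℓ, degY (c ℓ)) + 1 - φ3 + 1), ι (liftX (p i)) * Dx^[i] h
          = Dy (ι u * h / ι v) := by
  set ct := ∏ ℓ, c ℓ
  set W := b ^ 2 * ct
  set γ := degY bs + max (degY a) (degY b) + ∑ ℓ, degY (c ℓ)
  set r := γ + 1 - φ3
  have hct : ct ≠ 0 := prod_ne_zero_iff.mpr fun ℓ _ => hc ℓ
  have hB : b * bs * ct ≠ 0 := mul_ne_zero (mul_ne_zero hb hbs.ne_zero) hct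
  have hV : W ^ r * bs * c0 ≠ 0 :=
    mul_ne_zero (mul_ne_zero (pow_ne_zero _ (mul_ne_zero (pow_ne_zero _ hb) hct)) hbs.ne_zero) hc0
  have hVB : W ^ r * (b * bs ^ 2 * ct) * c0 = W ^ r * bs * c0 * (b * bs * ct) := by ring
  have hι : ∀ {q}, q ≠ 0 → ι q ≠ 0 := (map_ne_zero_iff ι hinj).mpr
  obtain ⟨h₁, hh₁⟩ := dvd_leibniz_mul_of_prime_dvd DY_mul b fun q hq => (hbsb q hq).mpr
  have hDx : Dx h * ι (c0 * W) = h * ι (derivative c0 * W + c0 *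
      ((derivative a * b - a * derivative b) * ct + b ^ 2 * logDerivNum derivative c e)) := by
    convert hDxh using 3 <;> simp only [W, logDerivNum] <;> ring
  have hDy := leibniz_ringHom_mul_div_mul_eq hDymul ι DY hDyι hDyh
    (hι (mul_ne_zero (mul_ne_zero hc0 (pow_ne_zero 2 hb)) hct)) (hι hV) (certCoeff_mul_eq r hh₁)
  have hBγ : degY (b * bs * ct) ≤ γ := by
    have := degY_mul_le (b * bs) ct
    have := degY_mul_le b bs
    have : degY ct ≤ _ := degY_prod_le univ c
    have := le_max_right (degY a) (degY b)
    omega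
  obtain ⟨p, ⟨i, hi, hpi⟩, z, hz⟩ := exists_sum_liftX_mul_eq_DY_mul_add_mul (range (r + 1))
    (fun i => iterDerivNum c0 W _ i * W ^ (r - i) * (b * bs ^ 2 * ct)) hB hBγ
    (degY_certCoeff_lt r hb hh₁ (by omega)) (by rw [card_range]; omega)
  refine ⟨p, ⟨i, Nat.lt_succ_iff.mp (mem_range.mp hi), hpi⟩, z, W ^ r * bs * c0, hV, ?_⟩
  refine sum_ringHom_mul_eq_of_mul_eq ι
    (iterate_mul_eq_mul_iterDerivNum hDxmul ι hDxι hDx (hι hc0)) ?_ (hι ?_) hz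
  · rw [hVB]
    exact hDy z
  · rw [hVB]
    exact mul_ne_zero hV hB

theorem minimal_order_bound
    {K : Type*} {E : Type*} [Field K] [CharZero K] [Field E]
    (Dx Dy : E → E)
    (hDxadd : ∀ u v : E, Dx (u + v) = Dx u + Dx v)
    (hDxmul : ∀ u v : E, Dx (u * v) = Dx u * v + u * Dx v)
    (hDyadd : ∀ u v : E, Dy (u + v) = Dy u + Dy v)
    (hDymul : ∀ u v : E, Dy (u * v) = Dy u * v + u * Dy v)
    (hcomm : ∀ u : E, Dx (Dy u) = Dy (Dx u))
    (ι : Polynomial (Polynomial K) →+* E)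
    (hinj : Function.Injective ι)
    (hDxι : ∀ q : Polynomial (Polynomial K), Dx (ι q) = ι (Polynomial.derivative q))
    (hDyι : ∀ q : Polynomial (Polynomial K), Dy (ι q) = ι (DY q))
    (L : ℕ) (a b c0 bs : Polynomial (Polynomial K))
    (c : Fin L → Polynomial (Polynomial K)) (e : Fin L → K)
    (ha : a ≠ 0) (hb : b ≠ 0) (hc0 : c0 ≠ 0) (hc : ∀ ℓ, c ℓ ≠ 0)
    (hbs : Squarefree bs)
    (hbsb : ∀ q : Polynomial (Polynomial K), Prime q → (q ∣ bs ↔ q ∣ b))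
    (h : E) (hh : h ≠ 0)
    (hDxh : Dx h * ι (c0 * b ^ 2 * (∏ ℓ, c ℓ))
      = h * ι (Polynomial.derivative c0 * b ^ 2 * (∏ ℓ, c ℓ)
          + (Polynomial.derivative a * b - a * Polynomial.derivative b) * c0 * (∏ ℓ, c ℓ)
          + c0 * b ^ 2 * ∑ ℓ, e ℓ • (Polynomial.derivative (c ℓ) * ∏ j ∈ Finset.univ.erase ℓ, c j)))
    (hDyh : Dy h * ι (c0 * b ^ 2 * (∏ ℓ, c ℓ))
      = h * ι (DY c0 * b ^ 2 * (∏ ℓ, c ℓ)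
          + (DY a * b - a * DY b) * c0 * (∏ ℓ, c ℓ)
          + c0 * b ^ 2 * ∑ ℓ, e ℓ • (DY (c ℓ) * ∏ j ∈ Finset.univ.erase ℓ, c j)))
    (hce : ∀ ℓ, e ℓ ≠ 0)
    (hndx : 0 < max a.natDegree b.natDegree + ∑ ℓ, (c ℓ).natDegree)
    (hndy : 0 < max (degY a) (degY b) + ∑ ℓ, degY (c ℓ))
    (φ3 : ℕ) (hφ3a : φ3 ≤ 1)
    (hφ3 : φ3 = 1 ↔
      ((∃ a' b' : Polynomial K, b' ≠ 0 ∧ a * liftX b' = b * liftX a') ∧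
       (∀ ℓ, degY (c ℓ) = 0 ∨ ∃ n : ℤ, e ℓ = (n : K)) ∧
       (∃ η : ℤ, (η : K) = ∑ ℓ, e ℓ * (degY (c ℓ) : K) ∧ η ≤ (degY c0 : ℤ))))
 :
    ∃ p : ℕ → Polynomial K,
      (∃ i ≤ (degY bs + max (degY a) (degY b) + ∑ ℓ, degY (c ℓ)) + 1 - φ3, p i ≠ 0) ∧
      ∃ u v : Polynomial (Polynomial K), v ≠ 0 ∧
        ∑ i ∈ Finset.range ((degY bs + max (degY a) (degY b) + ∑ ℓ, degY (c ℓ)) + 1 - φ3 + 1), ι (liftX (p i)) * Dx^[i] h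
          = Dy (ι u * h / ι v) :=
  minimal_order_bound_general Dx Dy hDxmul hDymul ι hinj hDxι hDyι L a b c0 bs c e hb hc0 hc hbs
    hbsb h hDxh hDyh hndy φ3 hφ3a
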